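/- arXiv:q-alg/9605009 — 7 statements merged into one kernel-verified Lean document; each statement's English description precedes it below -/
import Mathlib

section
/- For all a, b ∈ B and all k, l ∈ {1,…,d} one has Σ_{r=1}^d τ_{kr}(a)·τ_{rl}(b) = τ_{kl}(a·b) and (τ_{kl}(a))* = τ_{lk}(a*); that is, the associated matrix map τ : B → M_d(B) is a (not necessarily unital) *-algebra homomorphism, where M_d(B) carries matrix multiplication and the conjugate-transpose star. -/
open scoped BigOperators

/-- The map `τ : B → M_d(B)`, `τ_{kl}(a) = Σ_i ψ_{ki}·a·ψ_{li}*`. -/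
noncomputable def tauMap {B : Type*} [Ring B] [StarRing B] {d n : ℕ}
    (ψ : Fin d → Fin n → B) (a : B) : Matrix (Fin d) (Fin d) B :=
  Matrix.of fun k l => ∑ i, ψ k i * a * star (ψ l i)

/-- If `Σ_k ψ_{ki}*·ψ_{kj} = δ_{ij}·1`, then for all `a b ∈ B` and `k l`,
`Σ_r τ_{kr}(a)·τ_{rl}(b) = τ_{kl}(a·b)` and `(τ_{kl}(a))* = τ_{lk}(a*)`; that is, the matrix
map `τ : B → M_d(B)` is multiplicative and star-preserving (a not necessarily unital
*-algebra homomorphism), where `M_d(B)` carries matrix multiplication and the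
conjugate-transpose star. -/
theorem tau_star_alg_hom {B : Type*} [Ring B] [Algebra ℂ B] [StarRing B] [StarModule ℂ B]
    {d n : ℕ} (hd : 1 ≤ d) (hn : 1 ≤ n) (ψ : Fin d → Fin n → B)
    (horth : ∀ i j : Fin n, ∑ k, star (ψ k i) * ψ k j = if i = j then (1 : B) else 0) :
    (∀ (a b : B) (k l : Fin d),
        ∑ r, tauMap ψ a k r * tauMap ψ b r l = tauMap ψ (a * b) k l) ∧
    (∀ (a : B) (k l : Fin d), star (tauMap ψ a k l) = tauMap ψ (star a) l k) ∧
    (∀ a b : B, tauMap ψ (a * b) = tauMap ψ a * tauMap ψ b) ∧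
    (∀ a : B, tauMap ψ (star a) = star (tauMap ψ a)) := by
  have hmul : ∀ (a b : B) (k l : Fin d),
      ∑ r, tauMap ψ a k r * tauMap ψ b r l = tauMap ψ (a * b) k l := by
    intro a b k l
    simp only [tauMap, Matrix.of_apply, Finset.sum_mul, Finset.mul_sum]
    rw [Finset.sum_comm]
    refine Finset.sum_congr rfl fun i _ => ?_
    rw [Finset.sum_comm]
    have key : ∀ y : Fin n, ∑ x : Fin d, ψ k y * a * star (ψ x y) * (ψ x i * b * star (ψ l i))
        = ψ k y * a * ((if y = i then (1:B) else 0) * (b * star (ψ l i))) := by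
      intro y
      rw [← horth y i, Finset.sum_mul, Finset.mul_sum]
      exact Finset.sum_congr rfl fun r _ => by noncomm_ring
    simp_rw [key]
    simp [Finset.sum_ite_eq', mul_assoc]
  have hstar : ∀ (a : B) (k l : Fin d),
      star (tauMap ψ a k l) = tauMap ψ (star a) l k := by
    intro a k l
    simp [tauMap, star_sum, star_mul, mul_assoc]
  refine ⟨hmul, hstar, ?_, ?_⟩
  · intro a b
    ext k l
    rw [Matrix.mul_apply, hmul]
  · intro a
    ext k l
    rw [Matrix.star_apply, hstar]
end

section
/- For every m ≥ 1, every a ∈ B, every α ∈ {1,…,d}^m and every ω ∈ {1,…,n}^m, the iterated commutation relation Ψ_{αω}·a = Σ_{β ∈ {1,…,d}^m} τ^m_{αβ}(a)·Ψ_{βω} holds. -/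
open scoped BigOperators

/-- The ordered monomial `Ψ_{αω} = ψ_{α₁ω₁}·ψ_{α₂ω₂}···ψ_{α_mω_m}`. -/
def prodPsi {B : Type*} [Ring B] {d n m : ℕ} (ψ : Fin d → Fin n → B)
    (α : Fin m → Fin d) (ω : Fin m → Fin n) : B :=
  (List.ofFn fun t => ψ (α t) (ω t)).prod

/-- The iterated map `τ^m_{αβ}(a) = Σ_{ω ∈ {1,…,n}^m} Ψ_{αω}·a·Ψ_{βω}*`. -/
noncomputable def tauIter {B : Type*} [Ring B] [StarRing B] {d n m : ℕ}
    (ψ : Fin d → Fin n → B) (a : B) (α β : Fin m → Fin d) : B :=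
  ∑ ω : Fin m → Fin n, prodPsi ψ α ω * a * star (prodPsi ψ β ω)

lemma prodPsi_succ {B : Type*} [Ring B] {d n m : ℕ} (ψ : Fin d → Fin n → B)
    (α : Fin (m + 1) → Fin d) (ω : Fin (m + 1) → Fin n) :
    prodPsi ψ α ω = ψ (α 0) (ω 0) *
      prodPsi ψ (fun t => α t.succ) (fun t => ω t.succ) := by
  simp [prodPsi, List.ofFn_succ]

lemma one_step {B : Type*} [Ring B] [StarRing B] {d n : ℕ} (ψ : Fin d → Fin n → B)
    (horth : ∀ i j : Fin n, ∑ k, star (ψ k i) * ψ k j = if i = j then (1 : B) else 0)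
    (k : Fin d) (i : Fin n) (x : B) :
    ψ k i * x = ∑ k' : Fin d, (∑ j : Fin n, ψ k j * x * star (ψ k' j)) * ψ k' i := by
  have h1 : ∀ k' : Fin d, (∑ j : Fin n, ψ k j * x * star (ψ k' j)) * ψ k' i
      = ∑ j : Fin n, ψ k j * (x * (star (ψ k' j) * ψ k' i)) := by
    intro k'; rw [Finset.sum_mul]; simp [mul_assoc]
  simp_rw [h1]
  rw [Finset.sum_comm]
  have h2 : ∀ j : Fin n, ∑ k' : Fin d, ψ k j * (x * (star (ψ k' j) * ψ k' i))
      = ψ k j * (x * (if j = i then (1 : B) else 0)) := by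
    intro j
    rw [← Finset.mul_sum, ← Finset.mul_sum, horth j i]
  simp_rw [h2]
  simp [mul_ite]

lemma tau_succ {B : Type*} [Ring B] [StarRing B] {d n m : ℕ} (ψ : Fin d → Fin n → B)
    (a : B) (α β : Fin (m + 1) → Fin d) :
    tauIter ψ a α β = ∑ j : Fin n,
      ψ (α 0) j * tauIter ψ a (fun t => α t.succ) (fun t => β t.succ) * star (ψ (β 0) j) := by
  rw [tauIter, ← (Fin.consEquiv (fun _ => Fin n)).sum_comp
    (fun ω => prodPsi ψ α ω * a * star (prodPsi ψ β ω))]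
  rw [Fintype.sum_prod_type]
  refine Finset.sum_congr rfl fun j _ => ?_
  rw [tauIter, Finset.mul_sum, Finset.sum_mul]
  refine Finset.sum_congr rfl fun ω' _ => ?_
  simp only [Fin.consEquiv_apply, prodPsi_succ ψ α, prodPsi_succ ψ β, Fin.cons_zero,
    Fin.cons_succ, star_mul]
  simp only [mul_assoc]

/-- For every `m ≥ 1`, every `a ∈ B`, every `α ∈ {1,…,d}^m` and every
`ω ∈ {1,…,n}^m`, the iterated commutation relation
`Ψ_{αω}·a = Σ_{β ∈ {1,…,d}^m} τ^m_{αβ}(a)·Ψ_{βω}` holds. -/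
theorem prodPsi_commutation {B : Type*} [Ring B] [Algebra ℂ B] [StarRing B] [StarModule ℂ B]
    {d n : ℕ} (hd : 1 ≤ d) (hn : 1 ≤ n) (ψ : Fin d → Fin n → B)
    (horth : ∀ i j : Fin n, ∑ k, star (ψ k i) * ψ k j = if i = j then (1 : B) else 0)
    (m : ℕ) (hm : 1 ≤ m) (a : B) (α : Fin m → Fin d) (ω : Fin m → Fin n) :
    prodPsi ψ α ω * a = ∑ β : Fin m → Fin d, tauIter ψ a α β * prodPsi ψ β ω := by
  clear hm hd hn
  induction m with
  | zero =>
      simp [prodPsi, tauIter, List.ofFn_zero]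
  | succ m ih =>
      rw [prodPsi_succ, mul_assoc, ih (fun t => α t.succ) (fun t => ω t.succ),
        Finset.mul_sum]
      rw [← (Fin.consEquiv (fun _ => Fin d)).sum_comp
        (fun β => tauIter ψ a α β * prodPsi ψ β ω)]
      rw [Fintype.sum_prod_type, Finset.sum_comm]
      refine Finset.sum_congr rfl fun β' _ => ?_
      rw [← mul_assoc, one_step ψ horth (α 0) (ω 0)
        (tauIter ψ a (fun t => α t.succ) β'), Finset.sum_mul]
      refine Finset.sum_congr rfl fun k _ => ?_
      rw [tau_succ, prodPsi_succ]
      simp only [Fin.consEquiv_apply, Fin.cons_zero, Fin.cons_succ, mul_assoc]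
end

section
/- For all k ∈ {1,…,d} and i ∈ {1,…,n} one has Σ_{α ∈ {1,…,d}^m} S_{αk}*·ψ̂_{αi} = ψ_{ki}*. -/
open scoped BigOperators

/-- The degree-`m` multiplet elements `ψ̂_{αi} = Σ_{ω ∈ {1,…,n}^m} a_{iω}·Ψ_{αω}`. -/
noncomputable def psiHat {B : Type*} [Ring B] [Algebra ℂ B] {d n m : ℕ}
    (ψ : Fin d → Fin n → B) (c : Fin n → (Fin m → Fin n) → ℂ)
    (α : Fin m → Fin d) (i : Fin n) : B :=
  ∑ ω : Fin m → Fin n, c i ω • prodPsi ψ α ω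

/-- The elements `S_{αk} = Σ_{i,j} C⁻¹_{ji}·ψ̂_{αi}·ψ_{kj}`. -/
noncomputable def SEl {B : Type*} [Ring B] [Algebra ℂ B] {d n m : ℕ}
    (ψ : Fin d → Fin n → B) (c : Fin n → (Fin m → Fin n) → ℂ)
    (C : Matrix (Fin n) (Fin n) ℂ) (α : Fin m → Fin d) (k : Fin d) : B :=
  ∑ i, ∑ j, C⁻¹ j i • (psiHat ψ c α i * ψ k j)

/-- For all `k ∈ {1,…,d}` and `i ∈ {1,…,n}` one has
`Σ_{α ∈ {1,…,d}^m} S_{αk}*·ψ̂_{αi} = ψ_{ki}*`. -/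
theorem SEl_psiHat {B : Type*} [Ring B] [Algebra ℂ B] [StarRing B] [StarModule ℂ B]
    {d n : ℕ} (hd : 1 ≤ d) (hn : 1 ≤ n) (ψ : Fin d → Fin n → B)
    (horth : ∀ i j : Fin n, ∑ k, star (ψ k i) * ψ k j = if i = j then (1 : B) else 0)
    (m : ℕ) (hm : 1 ≤ m) (c : Fin n → (Fin m → Fin n) → ℂ)
    (C : Matrix (Fin n) (Fin n) ℂ) (hC : IsUnit C) (hherm : C.IsHermitian)
    (hrel : ∀ i j : Fin n,
      ∑ α : Fin m → Fin d, star (psiHat ψ c α i) * psiHat ψ c α j = C j i • (1 : B))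
    (k : Fin d) (i : Fin n) :
    ∑ α : Fin m → Fin d, star (SEl ψ c C α k) * psiHat ψ c α i = star (ψ k i) := by
  have hdet := (Matrix.isUnit_iff_isUnit_det C).mp hC
  have hCinv : C * C⁻¹ = 1 := Matrix.mul_nonsing_inv C hdet
  have hstar : ∀ j i' : Fin n, star (C⁻¹ j i') = C⁻¹ i' j := fun j i' =>
    hherm.inv.apply i' j ▸ rfl
  calc ∑ α : Fin m → Fin d, star (SEl ψ c C α k) * psiHat ψ c α i
      = ∑ i', ∑ j, C⁻¹ i' j • (star (ψ k j) *
          ∑ α : Fin m → Fin d, star (psiHat ψ c α i') * psiHat ψ c α i) := by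
        simp only [SEl, star_sum, star_smul, star_mul, Finset.sum_mul, smul_mul_assoc,
          Finset.mul_sum, Finset.smul_sum, mul_assoc, hstar]
        rw [Finset.sum_comm]
        refine Finset.sum_congr rfl fun i' _ => ?_
        rw [Finset.sum_comm]
    _ = ∑ j, (∑ i', C i i' * C⁻¹ i' j) • star (ψ k j) := by
        rw [Finset.sum_comm]
        refine Finset.sum_congr rfl fun j _ => ?_
        rw [Finset.sum_smul]
        refine Finset.sum_congr rfl fun i' _ => ?_
        rw [hrel i' i, mul_smul_comm, mul_one, smul_smul, mul_comm]
    _ = star (ψ k i) := by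
        have h1 : ∀ j, (∑ i', C i i' * C⁻¹ i' j) = (1 : Matrix (Fin n) (Fin n) ℂ) i j := by
          intro j; rw [← hCinv]; rfl
        simp [h1, Matrix.one_apply, ite_smul]
end

section
/- For every a ∈ B and all k ∈ {1,…,d}, i ∈ {1,…,n}, the commutation relation ψ_{ki}*·a = Σ_{α,β ∈ {1,…,d}^m} S_{αk}*·τ^m_{αβ}(a)·ψ̂_{βi} holds. -/
open scoped BigOperators

lemma prodPsi_cons {B : Type*} [Ring B] {d n m : ℕ} (ψ : Fin d → Fin n → B)
    (x : Fin d) (p : Fin m → Fin d) (ω : Fin (m+1) → Fin n) :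
    prodPsi ψ (Fin.cons x p) ω
      = ψ x (ω 0) * prodPsi ψ p (fun t => ω t.succ) := by
  simp [prodPsi, List.ofFn_succ]

lemma orthIter {B : Type*} [Ring B] [StarRing B] {d n : ℕ} (ψ : Fin d → Fin n → B)
    (horth : ∀ i j : Fin n, ∑ k, star (ψ k i) * ψ k j = if i = j then (1 : B) else 0) :
    ∀ (m : ℕ) (ω ω' : Fin m → Fin n),
      ∑ α : Fin m → Fin d, star (prodPsi ψ α ω) * prodPsi ψ α ω'
        = if ω = ω' then (1 : B) else 0 := by
  intro m
  induction m with
  | zero =>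
    intro ω ω'
    simp [prodPsi, Subsingleton.elim ω ω']
  | succ m ih =>
    intro ω ω'
    rw [← (Fin.consEquiv (fun _ => Fin d)).sum_comp
      (fun α => star (prodPsi ψ α ω) * prodPsi ψ α ω')]
    rw [Fintype.sum_prod_type]
    have key : ∀ x : Fin d, ∀ p : Fin m → Fin d,
        star (prodPsi ψ (Fin.consEquiv (fun _ => Fin d) (x, p)) ω)
          * prodPsi ψ (Fin.consEquiv (fun _ => Fin d) (x, p)) ω'
        = star (prodPsi ψ p (fun t => ω t.succ))
            * (star (ψ x (ω 0)) * ψ x (ω' 0))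
            * prodPsi ψ p (fun t => ω' t.succ) := by
      intro x p
      have he : Fin.consEquiv (fun _ => Fin d) (x, p) = Fin.cons x p := rfl
      rw [he, prodPsi_cons, prodPsi_cons, star_mul]
      rw [mul_assoc, mul_assoc, mul_assoc]
    calc ∑ x : Fin d, ∑ p : Fin m → Fin d,
          star (prodPsi ψ (Fin.consEquiv (fun _ => Fin d) (x, p)) ω)
            * prodPsi ψ (Fin.consEquiv (fun _ => Fin d) (x, p)) ω'
        = ∑ p : Fin m → Fin d, star (prodPsi ψ p (fun t => ω t.succ))
            * (∑ x : Fin d, star (ψ x (ω 0)) * ψ x (ω' 0))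
            * prodPsi ψ p (fun t => ω' t.succ) := by
          rw [Finset.sum_comm]
          refine Finset.sum_congr rfl fun p _ => ?_
          simp_rw [key]
          rw [← Finset.sum_mul, ← Finset.mul_sum]
      _ = if ω = ω' then (1 : B) else 0 := by
          rw [horth]
          by_cases h0 : ω 0 = ω' 0
          · simp_rw [if_pos h0, mul_one]
            rw [ih]
            by_cases ht : (fun t : Fin m => ω t.succ) = (fun t => ω' t.succ)
            · rw [if_pos ht, if_pos]
              funext t
              refine Fin.cases h0 (fun j => ?_) t
              exact congrFun ht j
            · rw [if_neg ht, if_neg]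
              intro h; exact ht (by funext t; rw [h])
          · simp_rw [if_neg h0, mul_zero, zero_mul]
            rw [if_neg (fun h => h0 (by rw [h]))]
            simp

lemma sumBeta {B : Type*} [Ring B] [Algebra ℂ B] [StarRing B] {d n m : ℕ}
    (ψ : Fin d → Fin n → B)
    (horth : ∀ i j : Fin n, ∑ k, star (ψ k i) * ψ k j = if i = j then (1 : B) else 0)
    (c : Fin n → (Fin m → Fin n) → ℂ) (ω : Fin m → Fin n) (i : Fin n) :
    ∑ β : Fin m → Fin d, star (prodPsi ψ β ω) * psiHat ψ c β i = c i ω • (1 : B) := by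
  simp only [psiHat, Finset.mul_sum, mul_smul_comm]
  rw [Finset.sum_comm]
  simp_rw [← Finset.smul_sum, orthIter ψ horth m ω]
  rw [Finset.sum_eq_single ω]
  · simp
  · intro b _ hb
    rw [if_neg (fun h => hb h.symm), smul_zero]
  · simp

lemma sumAlphaS {B : Type*} [Ring B] [Algebra ℂ B] [StarRing B] [StarModule ℂ B]
    {d n m : ℕ} (ψ : Fin d → Fin n → B)
    (c : Fin n → (Fin m → Fin n) → ℂ)
    (C : Matrix (Fin n) (Fin n) ℂ) (hC : IsUnit C) (hherm : C.IsHermitian)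
    (hrel : ∀ i j : Fin n,
      ∑ α : Fin m → Fin d, star (psiHat ψ c α i) * psiHat ψ c α j = C j i • (1 : B))
    (k : Fin d) (i : Fin n) :
    ∑ α : Fin m → Fin d, star (SEl ψ c C α k) * psiHat ψ c α i = star (ψ k i) := by
  have hdet : IsUnit C.det := (Matrix.isUnit_iff_isUnit_det C).mp hC
  have hinv : C⁻¹.IsHermitian := hherm.inv
  have hstarS : ∀ α, star (SEl ψ c C α k)
      = ∑ p, ∑ q, star (C⁻¹ q p) • (star (ψ k q) * star (psiHat ψ c α p)) := by
    intro α
    simp [SEl, star_sum, star_smul, star_mul]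
  calc ∑ α : Fin m → Fin d, star (SEl ψ c C α k) * psiHat ψ c α i
      = ∑ p, ∑ q, star (C⁻¹ q p) • (star (ψ k q)
          * ∑ α : Fin m → Fin d, star (psiHat ψ c α p) * psiHat ψ c α i) := by
        simp_rw [hstarS, Finset.sum_mul]
        rw [Finset.sum_comm]
        refine Finset.sum_congr rfl fun p _ => ?_
        rw [Finset.sum_comm]
        refine Finset.sum_congr rfl fun q _ => ?_
        rw [Finset.mul_sum, Finset.smul_sum]
        refine Finset.sum_congr rfl fun α _ => ?_
        rw [smul_mul_assoc, mul_assoc]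
    _ = ∑ q, (∑ p, star (C⁻¹ q p) * C i p) • star (ψ k q) := by
        rw [Finset.sum_comm]
        refine Finset.sum_congr rfl fun q _ => ?_
        simp_rw [hrel, mul_smul_comm, mul_one, smul_smul]
        rw [← Finset.sum_smul]
    _ = star (ψ k i) := by
        have hcc : ∀ q, (∑ p, star (C⁻¹ q p) * C i p) = if i = q then 1 else 0 := by
          intro q
          have h1 : ∀ p, star (C⁻¹ q p) = C⁻¹ p q := by
            intro p
            conv_rhs => rw [← hinv.eq]
            rfl
          calc (∑ p, star (C⁻¹ q p) * C i p) = ∑ p, C i p * C⁻¹ p q := by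
                simp_rw [h1, mul_comm]
            _ = (C * C⁻¹) i q := rfl
            _ = if i = q then 1 else 0 := by
                rw [Matrix.mul_nonsing_inv C hdet, Matrix.one_apply]
        simp_rw [hcc]
        rw [Finset.sum_eq_single i]
        · simp
        · intro b _ hb; rw [if_neg (fun h => hb h.symm), zero_smul]
        · simp

/-- For every `a ∈ B` and all `k ∈ {1,…,d}`, `i ∈ {1,…,n}`, the commutation
relation `ψ_{ki}*·a = Σ_{α,β ∈ {1,…,d}^m} S_{αk}*·τ^m_{αβ}(a)·ψ̂_{βi}` holds. -/
theorem psiStar_commutation {B : Type*} [Ring B] [Algebra ℂ B] [StarRing B] [StarModule ℂ B]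
    {d n : ℕ} (hd : 1 ≤ d) (hn : 1 ≤ n) (ψ : Fin d → Fin n → B)
    (horth : ∀ i j : Fin n, ∑ k, star (ψ k i) * ψ k j = if i = j then (1 : B) else 0)
    (m : ℕ) (hm : 1 ≤ m) (c : Fin n → (Fin m → Fin n) → ℂ)
    (C : Matrix (Fin n) (Fin n) ℂ) (hC : IsUnit C) (hherm : C.IsHermitian)
    (hrel : ∀ i j : Fin n,
      ∑ α : Fin m → Fin d, star (psiHat ψ c α i) * psiHat ψ c α j = C j i • (1 : B))
    (a : B) (k : Fin d) (i : Fin n) :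
    star (ψ k i) * a
      = ∑ α : Fin m → Fin d, ∑ β : Fin m → Fin d,
          star (SEl ψ c C α k) * tauIter ψ a α β * psiHat ψ c β i := by
  have hsum : ∀ α : Fin m → Fin d,
      ∑ β : Fin m → Fin d, star (SEl ψ c C α k) * tauIter ψ a α β * psiHat ψ c β i
        = star (SEl ψ c C α k) * psiHat ψ c α i * a := by
    intro α
    calc ∑ β : Fin m → Fin d, star (SEl ψ c C α k) * tauIter ψ a α β * psiHat ψ c β i
        = ∑ ω : Fin m → Fin n, star (SEl ψ c C α k) * (prodPsi ψ α ω * (a *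
            (∑ β : Fin m → Fin d, star (prodPsi ψ β ω) * psiHat ψ c β i))) := by
          simp only [tauIter, Finset.mul_sum, Finset.sum_mul]
          rw [Finset.sum_comm]
          refine Finset.sum_congr rfl fun ω _ => ?_
          refine Finset.sum_congr rfl fun β _ => ?_
          simp only [mul_assoc]
      _ = star (SEl ψ c C α k) * psiHat ψ c α i * a := by
          simp_rw [sumBeta ψ horth c]
          rw [psiHat, Finset.mul_sum, Finset.sum_mul]
          refine Finset.sum_congr rfl fun ω _ => ?_
          simp only [mul_smul_comm, smul_mul_assoc, mul_one, mul_assoc]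
  calc star (ψ k i) * a
      = (∑ α : Fin m → Fin d, star (SEl ψ c C α k) * psiHat ψ c α i) * a := by
        rw [sumAlphaS ψ c C hC hherm hrel k i]
    _ = ∑ α : Fin m → Fin d, ∑ β : Fin m → Fin d,
          star (SEl ψ c C α k) * tauIter ψ a α β * psiHat ψ c β i := by
        rw [Finset.sum_mul]
        exact Finset.sum_congr rfl fun α _ => (hsum α).symm
end

section
/- For all i, j ∈ {1,…,n} one has Σ_{l=1}^d Σ_{β ∈ {1,…,d}^m} S_{βl}*·ψ̂_{βi}·ψ_{lj} = δ_{ij}·1. -/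
open scoped BigOperators

lemma sum_swap4 {M : Type*} [AddCommMonoid M] {ι₁ ι₂ ι₃ ι₄ : Type*}
    [Fintype ι₁] [Fintype ι₂] [Fintype ι₃] [Fintype ι₄]
    (f : ι₁ → ι₂ → ι₃ → ι₄ → M) :
    ∑ a, ∑ b, ∑ c, ∑ e, f a b c e = ∑ c, ∑ e, ∑ a, ∑ b, f a b c e := by
  conv_lhs => enter [2, a]; rw [Finset.sum_comm]
  rw [Finset.sum_comm]
  conv_lhs => enter [2, c, 2, a]; rw [Finset.sum_comm]
  conv_lhs => enter [2, c]; rw [Finset.sum_comm]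


/-- For all `i, j ∈ {1,…,n}` one has
`Σ_{l=1}^d Σ_{β ∈ {1,…,d}^m} S_{βl}*·ψ̂_{βi}·ψ_{lj} = δ_{ij}·1`. -/
theorem SEl_psiHat_psi_orth {B : Type*} [Ring B] [Algebra ℂ B] [StarRing B] [StarModule ℂ B]
    {d n : ℕ} (hd : 1 ≤ d) (hn : 1 ≤ n) (ψ : Fin d → Fin n → B)
    (horth : ∀ i j : Fin n, ∑ k, star (ψ k i) * ψ k j = if i = j then (1 : B) else 0)
    (m : ℕ) (hm : 1 ≤ m) (c : Fin n → (Fin m → Fin n) → ℂ)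
    (C : Matrix (Fin n) (Fin n) ℂ) (hC : IsUnit C) (hherm : C.IsHermitian)
    (hrel : ∀ i j : Fin n,
      ∑ α : Fin m → Fin d, star (psiHat ψ c α i) * psiHat ψ c α j = C j i • (1 : B))
    (i j : Fin n) :
    ∑ l, ∑ β : Fin m → Fin d, star (SEl ψ c C β l) * psiHat ψ c β i * ψ l j
      = if i = j then (1 : B) else 0 := by
  simp only [SEl]
  have hdet : IsUnit C.det := (Matrix.isUnit_iff_isUnit_det C).mp hC
  have hCC : C * C⁻¹ = 1 := Matrix.mul_nonsing_inv C hdet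
  have hinvherm : (C⁻¹).IsHermitian := hherm.inv
  have step1 : ∑ l, ∑ β : Fin m → Fin d,
        star (∑ p, ∑ q, C⁻¹ q p • (psiHat ψ c β p * ψ l q)) * psiHat ψ c β i * ψ l j
      = ∑ l, ∑ β : Fin m → Fin d, ∑ p, ∑ q, (starRingEnd ℂ) (C⁻¹ q p) •
          (star (ψ l q) * (star (psiHat ψ c β p) * psiHat ψ c β i) * ψ l j) := by
    simp only [star_sum, star_smul, star_mul, Finset.sum_mul, smul_mul_assoc, mul_assoc,
      starRingEnd_apply]
  rw [step1, sum_swap4]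
  have step2 : ∀ p q : Fin n,
      ∑ l, ∑ β : Fin m → Fin d, (starRingEnd ℂ) (C⁻¹ q p) •
          (star (ψ l q) * (star (psiHat ψ c β p) * psiHat ψ c β i) * ψ l j)
      = (starRingEnd ℂ) (C⁻¹ q p) • (C i p • (if q = j then (1:B) else 0)) := by
    intro p q
    have : ∀ l, ∑ β : Fin m → Fin d, (starRingEnd ℂ) (C⁻¹ q p) •
          (star (ψ l q) * (star (psiHat ψ c β p) * psiHat ψ c β i) * ψ l j)
        = (starRingEnd ℂ) (C⁻¹ q p) • (C i p • (star (ψ l q) * ψ l j)) := by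
      intro l
      rw [← Finset.smul_sum]
      congr 1
      rw [← Finset.sum_mul, ← Finset.mul_sum, hrel p i]
      rw [mul_smul_comm, smul_mul_assoc, mul_one]
    simp only [this, ← Finset.smul_sum, horth q j]
  simp only [step2]
  -- now: ∑ p, ∑ q, conj (C⁻¹ q p) • C i p • (if q = j then 1 else 0) = δ_{ij}
  have step3 : ∀ p : Fin n, ∑ q, (starRingEnd ℂ) (C⁻¹ q p) • (C i p • (if q = j then (1:B) else 0))
      = (C⁻¹ p j * C i p) • (1:B) := by
    intro p
    rw [Finset.sum_eq_single j]
    · rw [if_pos rfl]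
      have : (starRingEnd ℂ) (C⁻¹ j p) = C⁻¹ p j := by
        rw [starRingEnd_apply, ← hinvherm.apply p j]
      rw [this, smul_smul]
    · intro q _ hq; rw [if_neg hq]; simp
    · intro h; exact absurd (Finset.mem_univ j) h
  simp only [step3]
  have : ∑ p, (C⁻¹ p j * C i p) = if i = j then (1:ℂ) else 0 := by
    have := congrArg (fun M => M i j) hCC
    simp only [Matrix.mul_apply, Matrix.one_apply] at this
    rw [← this]
    exact Finset.sum_congr rfl fun p _ => mul_comm _ _
  rw [← Finset.sum_smul, this]
  split <;> simp
end

section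
/- If a ∈ B is δ-invariant, i.e. δ(a) = a ⊗ 1, then τ_{kl}(a) is δ-invariant for all k, l ∈ {1,…,d}: δ(τ_{kl}(a)) = τ_{kl}(a) ⊗ 1. (The invariant subalgebra is stable under the maps τ_{kl}.) -/
open scoped BigOperators TensorProduct

/-- If `a ∈ B` is `δ`-invariant, i.e. `δ(a) = a ⊗ 1`, then `τ_{kl}(a)` is
`δ`-invariant for all `k, l ∈ {1,…,d}`: `δ(τ_{kl}(a)) = τ_{kl}(a) ⊗ 1`. (The invariant
subalgebra is stable under the maps `τ_{kl}`.) -/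
theorem tau_preserves_invariants
    {B : Type*} [Ring B] [Algebra ℂ B] [StarRing B] [StarModule ℂ B]
    {A : Type*} [Ring A] [Algebra ℂ A] [StarRing A] [StarModule ℂ A]
    {d n : ℕ} (hd : 1 ≤ d) (hn : 1 ≤ n) (ψ : Fin d → Fin n → B)
    (horth : ∀ i j : Fin n, ∑ k, star (ψ k i) * ψ k j = if i = j then (1 : B) else 0)
    (u : Matrix (Fin n) (Fin n) A)
    (hu : ∀ p q : Fin n, ∑ i, u p i * star (u q i) = if p = q then (1 : A) else 0)
    (δ : B →ₐ[ℂ] B ⊗[ℂ] A)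
    (hδψ : ∀ (k : Fin d) (i : Fin n), δ (ψ k i) = ∑ j, ψ k j ⊗ₜ[ℂ] u j i)
    (hδψstar : ∀ (k : Fin d) (i : Fin n),
      δ (star (ψ k i)) = ∑ j, star (ψ k j) ⊗ₜ[ℂ] star (u j i))
    (a : B) (ha : δ a = a ⊗ₜ[ℂ] 1) (k l : Fin d) :
    δ (tauMap ψ a k l) = tauMap ψ a k l ⊗ₜ[ℂ] 1 := by
  simp only [tauMap, Matrix.of_apply, map_sum, map_mul, hδψ, hδψstar, ha]
  have key : ∀ i : Fin n,
      (∑ j, ψ k j ⊗ₜ[ℂ] u j i) * (a ⊗ₜ[ℂ] 1) * (∑ j', star (ψ l j') ⊗ₜ[ℂ] star (u j' i))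
      = ∑ j, ∑ j', (ψ k j * a * star (ψ l j')) ⊗ₜ[ℂ] (u j i * star (u j' i)) := by
    intro i
    rw [Finset.sum_mul, Finset.sum_mul]
    refine Finset.sum_congr rfl fun j _ => ?_
    rw [Finset.mul_sum]
    refine Finset.sum_congr rfl fun j' _ => ?_
    simp [Algebra.TensorProduct.tmul_mul_tmul, mul_assoc]
  rw [Finset.sum_congr rfl fun i _ => key i, Finset.sum_comm,
    Finset.sum_congr rfl fun j _ => Finset.sum_comm]
  have : ∀ j : Fin n,
      (∑ j', ∑ i, (ψ k j * a * star (ψ l j')) ⊗ₜ[ℂ] (u j i * star (u j' i)))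
      = (ψ k j * a * star (ψ l j)) ⊗ₜ[ℂ] 1 := by
    intro j
    have : ∀ j' : Fin n,
        (∑ i, (ψ k j * a * star (ψ l j')) ⊗ₜ[ℂ] (u j i * star (u j' i)))
        = (ψ k j * a * star (ψ l j')) ⊗ₜ[ℂ] (if j = j' then (1 : A) else 0) := by
      intro j'
      rw [← TensorProduct.tmul_sum, hu]
    rw [Finset.sum_congr rfl fun j' _ => this j']
    rw [Finset.sum_eq_single j (fun j' _ hne => by simp [Ne.symm hne]) (by simp)]
    simp
  rw [Finset.sum_congr rfl fun j _ => this j, ← TensorProduct.sum_tmul]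
end

section
/- For every element a of the ℂ-subalgebra of A generated by the matrix entries {u_{ij} : i, j = 1,…,n}, there exist finitely many elements b_1,…,b_N and q_1,…,q_N of B such that Σ_{α=1}^N (b_α ⊗ 1)·δ(q_α) = 1 ⊗ a. (This is the freeness property of the action δ on the universal bundle, granted that the u_{ij} generate A.) -/
open scoped BigOperators TensorProduct

/-- For every element `a` of the ℂ-subalgebra of `A` generated by the
matrix entries `{u_{ij}}`, there exist finitely many elements `b_1,…,b_N` and `q_1,…,q_N`
of `B` such that `Σ_α (b_α ⊗ 1)·δ(q_α) = 1 ⊗ a`.  (Freeness of the action `δ` on the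
universal bundle, granted that the `u_{ij}` generate `A`.) -/
theorem coaction_free
    {B : Type*} [Ring B] [Algebra ℂ B] [StarRing B] [StarModule ℂ B]
    {A : Type*} [Ring A] [Algebra ℂ A] [StarRing A] [StarModule ℂ A]
    {d n : ℕ} (hd : 1 ≤ d) (hn : 1 ≤ n) (ψ : Fin d → Fin n → B)
    (horth : ∀ i j : Fin n, ∑ k, star (ψ k i) * ψ k j = if i = j then (1 : B) else 0)
    (u : Matrix (Fin n) (Fin n) A)
    (δ : B →ₐ[ℂ] B ⊗[ℂ] A)
    (hδψ : ∀ (k : Fin d) (i : Fin n), δ (ψ k i) = ∑ j, ψ k j ⊗ₜ[ℂ] u j i)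
    (a : A) (ha : a ∈ Algebra.adjoin ℂ (Set.range fun p : Fin n × Fin n => u p.1 p.2)) :
    ∃ (N : ℕ) (b q : Fin N → B),
      ∑ α, (b α ⊗ₜ[ℂ] (1 : A)) * δ (q α) = (1 : B) ⊗ₜ[ℂ] a := by
  suffices h : ∃ (ι : Type) (_ : Fintype ι) (b q : ι → B),
      ∑ α, (b α ⊗ₜ[ℂ] (1 : A)) * δ (q α) = (1 : B) ⊗ₜ[ℂ] a by
    obtain ⟨ι, _, b, q, h⟩ := h
    refine ⟨Fintype.card ι, b ∘ (Fintype.equivFin ι).symm, q ∘ (Fintype.equivFin ι).symm, ?_⟩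
    rw [← h]
    exact Fintype.sum_equiv (Fintype.equivFin ι).symm _ _ (fun α => rfl)
  induction ha using Algebra.adjoin_induction with
  | mem x hx =>
      obtain ⟨p, rfl⟩ := hx
      refine ⟨Fin d, inferInstance, fun k => star (ψ k p.1), fun k => ψ k p.2, ?_⟩
      simp_rw [hδψ, Finset.mul_sum, Algebra.TensorProduct.tmul_mul_tmul, one_mul]
      rw [Finset.sum_comm]
      simp_rw [← TensorProduct.sum_tmul, horth, TensorProduct.ite_tmul]
      simp
  | algebraMap c =>
      refine ⟨Fin 1, inferInstance, fun _ => c • 1, fun _ => 1, ?_⟩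
      simp [Algebra.TensorProduct.tmul_mul_tmul, TensorProduct.smul_tmul,
        Algebra.algebraMap_eq_smul_one]
  | add x y hx hy hx' hy' =>
      obtain ⟨ι, _, b, q, hb⟩ := hx'
      obtain ⟨κ, _, b', q', hb'⟩ := hy'
      refine ⟨ι ⊕ κ, inferInstance, Sum.elim b b', Sum.elim q q', ?_⟩
      rw [Fintype.sum_sum_type]
      simp [hb, hb', TensorProduct.tmul_add]
  | mul x y hx hy hx' hy' =>
      obtain ⟨ι, _, b, q, hb⟩ := hx'
      obtain ⟨κ, _, b', q', hb'⟩ := hy'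
      refine ⟨ι × κ, inferInstance, fun p => b' p.2 * b p.1, fun p => q p.1 * q' p.2, ?_⟩
      have key : (1 : B) ⊗ₜ[ℂ] (x * y) = ((1 : B) ⊗ₜ[ℂ] x) * ((1 : B) ⊗ₜ[ℂ] y) := by
        simp [Algebra.TensorProduct.tmul_mul_tmul]
      rw [key, ← hb']
      rw [Finset.mul_sum]
      symm
      have comm : ∀ β : κ, ((1 : B) ⊗ₜ[ℂ] x) * ((b' β) ⊗ₜ[ℂ] (1 : A))
          = ((b' β) ⊗ₜ[ℂ] (1 : A)) * ((1 : B) ⊗ₜ[ℂ] x) := by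
        intro β
        simp [Algebra.TensorProduct.tmul_mul_tmul]
      calc ∑ β : κ, ((1 : B) ⊗ₜ[ℂ] x) * ((b' β ⊗ₜ[ℂ] (1 : A)) * δ (q' β))
          = ∑ β : κ, (b' β ⊗ₜ[ℂ] (1 : A)) * ((1 : B) ⊗ₜ[ℂ] x) * δ (q' β) := by
            simp_rw [← mul_assoc, comm]
        _ = ∑ β : κ, (b' β ⊗ₜ[ℂ] (1 : A)) * (∑ α : ι, (b α ⊗ₜ[ℂ] (1 : A)) * δ (q α)) * δ (q' β) := by
            rw [← hb]
        _ = ∑ p : ι × κ, ((b' p.2 * b p.1) ⊗ₜ[ℂ] (1 : A)) * δ (q p.1 * q' p.2) := by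
            rw [Fintype.sum_prod_type_right]
            refine Finset.sum_congr rfl fun β _ => ?_
            rw [Finset.mul_sum, Finset.sum_mul]
            refine Finset.sum_congr rfl fun α _ => ?_
            simp only [map_mul, ← mul_assoc, Algebra.TensorProduct.tmul_mul_tmul, one_mul]
end
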